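/- arXiv:2306.07844 — 4 statements merged into one kernel-verified Lean document; each statement's English description precedes it below -/
import Mathlib

section
/- Let P ⊆ ℕ be ω-closed with 0 ∈ P and with at least two elements, and let ε be an injective endomorphism of the semigroup B_ω^𝓕 (𝓕 = {[p) : p ∈ P}). Then the following conditions are equivalent: (i) ε is the identity map; (ii) there exists a non-idempotent element (i,j,p) ∈ B_ω^𝓕 (i.e. with i ≠ j) such that ε(i,j,p) = (i,j,p); (iii) ε has at least three distinct fixed points. (Theorem 2.5) -/
/-! The relations `(a,a,q)(a,b,q) = (a,b,q) = (a,b,q)(b,b,q)`, `(a,b,q)(b,a,q) = (a,a,q)` and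
`(a,a,q)(0,1,0) = (a,a+1,q)` force an injective endomorphism into the form
`ε (a,b,q) = (m q + a k, m q + b k, c q)` with slope `k ≥ 1`. A fixed point `(a,b,q)` gives
`m q = 0`, `c q = q`, and `k = 1` unless `a = b = 0`. Multiplying `(0,0,s)` by `(t,t,0)` carries a
fixed level `s` downwards: `c (s - t) = s - t k`. For `k ≥ 2` this gives levels `0` and `1` the
same image once `s ≥ 2`, so `(0,0,0)` and `(0,0,1)` are the only candidate fixed points. For
`k = 1`, injectivity forces `m = 0` and `c q ≤ q`, and an injective self-map of a subset of `ℕ`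
below the identity is the identity. -/

/-- A set `P ⊆ ℕ` of left endpoints encodes an ω-closed family
`𝓕 = {[p) : p ∈ P}` of nonempty inductive subsets of ω iff
`max p₁ (p₂ ∸ n) ∈ P` for all `p₁, p₂ ∈ P` and `n ∈ ℕ`. -/
def OmegaClosed (P : Set ℕ) : Prop :=
  ∀ p₁ ∈ P, ∀ p₂ ∈ P, ∀ n : ℕ, max p₁ (p₂ - n) ∈ P

/-- The multiplication of the semigroup `B_ω^𝓕` on triples `(i, j, p)`:
`(i₁,j₁,p₁)·(i₂,j₂,p₂) = (i₁ + (i₂ ∸ j₁), j₂ + (j₁ ∸ i₂), max (p₁ ∸ (i₂ ∸ j₁)) (p₂ ∸ (j₁ ∸ i₂)))`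
(the third coordinate records `(j₁ - i₂ + [p₁)) ∩ [p₂)` etc.). -/
def bmul (x y : ℕ × ℕ × ℕ) : ℕ × ℕ × ℕ :=
  (x.1 + (y.1 - x.2.1), y.2.1 + (x.2.1 - y.1),
    max (x.2.2 - (y.1 - x.2.1)) (y.2.2 - (x.2.1 - y.1)))

/-- The carrier of `B_ω^𝓕`: triples whose third coordinate lies in `P`. -/
def BF (P : Set ℕ) : Set (ℕ × ℕ × ℕ) := {x | x.2.2 ∈ P}

/-- `ε` is an endomorphism of the semigroup `B_ω^𝓕`. -/
def IsEndo (P : Set ℕ) (ε : ℕ × ℕ × ℕ → ℕ × ℕ × ℕ) : Prop :=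
  (∀ x ∈ BF P, ε x ∈ BF P) ∧
    ∀ x ∈ BF P, ∀ y ∈ BF P, ε (bmul x y) = bmul (ε x) (ε y)

theorem eqOn_self_of_injOn_of_le {α : Type*} [LinearOrder α] [WellFoundedLT α] {f : α → α}
    {s : Set α} (hmaps : Set.MapsTo f s s) (hinj : Set.InjOn f s) (hle : ∀ x ∈ s, f x ≤ x) :
    ∀ x ∈ s, f x = x := by
  intro x
  induction x using WellFoundedLT.induction with
  | ind x ih =>
    intro hx
    refine (hle x hx).eq_or_lt.resolve_right fun hlt => hlt.ne ?_
    exact hinj (hmaps hx) hx (ih (f x) hlt (hmaps hx))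

theorem lt_of_forall_succ_eq {f : ℕ → ℕ} {u v : ℕ} (hle : ∀ n, u ≤ f n)
    (hsucc : ∀ n, f (n + 1) = v + (f n - u)) (hne : ∀ n, f (n + 1) ≠ f n) : u < v := by
  by_contra! hvu
  have hdec : ∀ n, f n + n ≤ f 0 := by
    intro n
    induction n with
    | zero => simp
    | succ n ih => have := hsucc n; have := hne n; have := hle n; omega
  have := hdec (f 0 + 1)
  omega

theorem eq_add_mul_of_forall_succ_eq {f : ℕ → ℕ} {u v : ℕ} (huv : u ≤ v) (hle : ∀ n, u ≤ f n)
    (hsucc : ∀ n, f (n + 1) = v + (f n - u)) (n : ℕ) : f n = f 0 + n * (v - u) := by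
  induction n with
  | zero => simp
  | succ n ih => rw [hsucc, add_one_mul]; have := hle n; omega

theorem OmegaClosed.sub_mem {P : Set ℕ} (hP : OmegaClosed P) (h0 : 0 ∈ P) {q : ℕ} (hq : q ∈ P)
    (t : ℕ) : q - t ∈ P := by
  simpa using hP 0 h0 q hq t

section bmul

variable (a b q t : ℕ)

@[simp]
theorem bmul_mk (i₁ j₁ p₁ i₂ j₂ p₂ : ℕ) :
    bmul (i₁, j₁, p₁) (i₂, j₂, p₂) =
      (i₁ + (i₂ - j₁), j₂ + (j₁ - i₂), max (p₁ - (i₂ - j₁)) (p₂ - (j₁ - i₂))) :=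
  rfl

theorem snd_fst_eq_of_bmul_self {x : ℕ × ℕ × ℕ} (h : bmul x x = x) : x.2.1 = x.1 := by
  obtain ⟨i, j, p⟩ := x
  simp only [bmul_mk, Prod.mk.injEq] at h ⊢
  omega

theorem bmul_diag_self : bmul (a, a, q) (a, a, q) = (a, a, q) := by simp

theorem bmul_diag_left : bmul (a, a, q) (a, b, q) = (a, b, q) := by simp

theorem bmul_diag_right : bmul (a, b, q) (b, b, q) = (a, b, q) := by simp

theorem bmul_swap : bmul (a, b, q) (b, a, q) = (a, a, q) := by simp

theorem bmul_diag_shift : bmul (a, a, q) (0, 1, 0) = (a, a + 1, q) := by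
  simp only [bmul_mk, Prod.mk.injEq]; omega

theorem bmul_zero_diag : bmul (0, 0, q) (t, t, 0) = (t, t, q - t) := by simp

end bmul

namespace IsEndo

variable {P : Set ℕ} {ε : ℕ × ℕ × ℕ → ℕ × ℕ × ℕ}

theorem map_diag (hend : IsEndo P ε) {q : ℕ} (hq : q ∈ P) (a : ℕ) :
    (ε (a, a, q)).2.1 = (ε (a, a, q)).1 :=
  snd_fst_eq_of_bmul_self (by rw [← hend.2 _ hq _ hq, bmul_diag_self])

theorem map_mk (hend : IsEndo P ε) {q : ℕ} (hq : q ∈ P) (a b : ℕ) :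
    ε (a, b, q) = ((ε (a, a, q)).1, (ε (b, b, q)).1, (ε (a, a, q)).2.2) ∧
      (ε (b, b, q)).2.2 = (ε (a, a, q)).2.2 := by
  have h₁ := hend.2 (a, a, q) hq (a, b, q) hq
  have h₂ := hend.2 (a, b, q) hq (b, b, q) hq
  have h₃ := hend.2 (a, b, q) hq (b, a, q) hq
  have h₄ := hend.2 (b, a, q) hq (a, b, q) hq
  rw [bmul_diag_left] at h₁
  rw [bmul_diag_right] at h₂
  rw [bmul_swap] at h₃ h₄
  have da := hend.map_diag hq a
  have db := hend.map_diag hq b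
  generalize ε (a, b, q) = x, ε (b, a, q) = y, ε (a, a, q) = e₁, ε (b, b, q) = e₂ at *
  obtain ⟨A, B, C⟩ := x
  obtain ⟨A', B', C'⟩ := y
  obtain ⟨m₁, m₁', c₁⟩ := e₁
  obtain ⟨m₂, m₂', c₂⟩ := e₂
  simp only [bmul_mk, Prod.mk.injEq] at h₁ h₂ h₃ h₄ da db ⊢
  omega

theorem map_diag_succ (hend : IsEndo P ε) (h0 : 0 ∈ P) {q : ℕ} (hq : q ∈ P) (a : ℕ) :
    (ε (0, 0, 0)).1 ≤ (ε (a, a, q)).1 ∧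
      (ε (a + 1, a + 1, q)).1 = (ε (1, 1, 0)).1 + ((ε (a, a, q)).1 - (ε (0, 0, 0)).1) := by
  have h := hend.2 (a, a, q) hq (0, 1, 0) h0
  rw [bmul_diag_shift, (hend.map_mk hq a (a + 1)).1, (hend.map_mk h0 0 1).1,
    (hend.map_mk hq a a).1] at h
  simp only [bmul_mk, Prod.mk.injEq] at h
  omega

theorem map_diag_eq_add_mul (hend : IsEndo P ε) (h0 : 0 ∈ P) (hinj : Set.InjOn ε (BF P)) :
    (ε (0, 0, 0)).1 < (ε (1, 1, 0)).1 ∧ ∀ q ∈ P, ∀ a : ℕ,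
      (ε (a, a, q)).1 = (ε (0, 0, q)).1 + a * ((ε (1, 1, 0)).1 - (ε (0, 0, 0)).1) := by
  have hne : ∀ a, (ε (a + 1, a + 1, 0)).1 ≠ (ε (a, a, 0)).1 := by
    intro a h
    have h' := hinj (x₁ := (a + 1, a + 1, 0)) (x₂ := (a, a, 0)) h0 h0 (Prod.ext h
      (Prod.ext (by rw [hend.map_diag h0, hend.map_diag h0, h]) (hend.map_mk h0 a (a + 1)).2))
    simp at h'
  have hlt := lt_of_forall_succ_eq (fun a => (hend.map_diag_succ h0 h0 a).1)
    (fun a => (hend.map_diag_succ h0 h0 a).2) hne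
  exact ⟨hlt, fun q hq => eq_add_mul_of_forall_succ_eq hlt.le
    (fun a => (hend.map_diag_succ h0 hq a).1) (fun a => (hend.map_diag_succ h0 hq a).2)⟩

end IsEndo

/-- `m q` is the offset of level `q`, `c` the induced map on levels and `k` the slope. -/
def HasLinearForm (P : Set ℕ) (ε : ℕ × ℕ × ℕ → ℕ × ℕ × ℕ) (m c : ℕ → ℕ) (k : ℕ) : Prop :=
  ∀ q ∈ P, ∀ a b : ℕ, ε (a, b, q) = (m q + a * k, m q + b * k, c q)

theorem IsEndo.exists_hasLinearForm {P : Set ℕ} {ε : ℕ × ℕ × ℕ → ℕ × ℕ × ℕ}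
    (hend : IsEndo P ε) (h0 : 0 ∈ P) (hinj : Set.InjOn ε (BF P)) :
    ∃ m c : ℕ → ℕ, ∃ k, 1 ≤ k ∧ HasLinearForm P ε m c k := by
  obtain ⟨hlt, hdiag⟩ := hend.map_diag_eq_add_mul h0 hinj
  refine ⟨fun q => (ε (0, 0, q)).1, fun q => (ε (0, 0, q)).2.2, _, Nat.le_sub_of_add_le' hlt,
    fun q hq a b => ?_⟩
  rw [(hend.map_mk hq a b).1, hdiag q hq a, hdiag q hq b, (hend.map_mk hq 0 a).2]

namespace HasLinearForm

variable {P : Set ℕ} {ε : ℕ × ℕ × ℕ → ℕ × ℕ × ℕ} {m c : ℕ → ℕ} {k : ℕ}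

theorem level_injOn (hf : HasLinearForm P ε m c k) (hinj : Set.InjOn ε (BF P)) {q q' : ℕ}
    (hq : q ∈ P) (hq' : q' ∈ P) (hm : m q = m q') (hc : c q = c q') : q = q' := by
  have h := hinj (x₁ := (0, 0, q)) (x₂ := (0, 0, q')) hq hq' (by rw [hf q hq, hf q' hq', hm, hc])
  simpa using h

theorem of_map_eq_self (hf : HasLinearForm P ε m c k) (hk : 1 ≤ k) {a b q : ℕ} (hq : q ∈ P)
    (hfix : ε (a, b, q) = (a, b, q)) : m q = 0 ∧ c q = q ∧ (k = 1 ∨ a = 0 ∧ b = 0) := by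
  rw [hf q hq] at hfix
  simp only [Prod.mk.injEq] at hfix
  obtain ⟨ha, hb, hc⟩ := hfix
  rcases hk.eq_or_lt with rfl | hk2
  · exact ⟨by omega, hc, Or.inl rfl⟩
  · have := Nat.mul_le_mul_left a hk2
    have := Nat.mul_le_mul_left b hk2
    exact ⟨by omega, hc, Or.inr ⟨by omega, by omega⟩⟩

theorem offset_level_sub (hf : HasLinearForm P ε m c k) (hend : IsEndo P ε) (hP : OmegaClosed P)
    (h0 : 0 ∈ P) {q : ℕ} (hq : q ∈ P) (t : ℕ) :
    m (q - t) + t * k = max (m q) (m 0 + t * k) ∧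
      c (q - t) = max (c q - (m 0 + t * k - m q)) (c 0 - (m q - (m 0 + t * k))) := by
  have h := hend.2 (0, 0, q) hq (t, t, 0) h0
  rw [bmul_zero_diag, hf _ (hP.sub_mem h0 hq t), hf q hq, hf 0 h0] at h
  simp only [bmul_mk, Prod.mk.injEq] at h
  omega

theorem sub_of_fixed_level (hf : HasLinearForm P ε m c k) (hend : IsEndo P ε)
    (hinj : Set.InjOn ε (BF P)) (hP : OmegaClosed P) (h0 : 0 ∈ P) (hk : 1 ≤ k) {s : ℕ}
    (hs : s ∈ P) (hms : m s = 0) (hcs : c s = s) (t : ℕ) :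
    m (s - t) = 0 ∧ c (s - t) = s - t * k := by
  have hsub : ∀ t, m (s - t) = 0 ∧ c (s - t) = max (s - t * k) (c 0) := by
    intro t
    have h₀ := (hf.offset_level_sub hend hP h0 hs 0).1
    have h := hf.offset_level_sub hend hP h0 hs t
    simp only [Nat.sub_zero, zero_mul, add_zero, hms, hcs] at h h₀
    omega
  have hm0 : m 0 = 0 := by simpa using (hsub s).1
  have hc0le : c 0 ≤ s := by have := (hsub 0).2; simp only [Nat.sub_zero, hcs] at this; omega
  have hc0 : c 0 = 0 := by
    have h := hsub (s - c 0)
    rw [Nat.sub_sub_self hc0le] at h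
    have := Nat.le_mul_of_pos_right (s - c 0) hk
    exact hf.level_injOn hinj (by simpa [Nat.sub_sub_self hc0le] using hP.sub_mem h0 hs (s - c 0))
      h0 (by rw [h.1, hm0]) (by omega)
  simpa [hc0] using hsub t

theorem eq_zero_or_eq_one_of_map_eq_self (hf : HasLinearForm P ε m c k) (hend : IsEndo P ε)
    (hinj : Set.InjOn ε (BF P)) (hP : OmegaClosed P) (h0 : 0 ∈ P) (hk : 2 ≤ k)
    {x : ℕ × ℕ × ℕ} (hx : x ∈ BF P) (hfix : ε x = x) : x = (0, 0, 0) ∨ x = (0, 0, 1) := by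
  obtain ⟨a, b, s⟩ := x
  change s ∈ P at hx
  obtain ⟨hms, hcs, hab⟩ := hf.of_map_eq_self (by omega) hx hfix
  obtain ⟨rfl, rfl⟩ : a = 0 ∧ b = 0 := hab.resolve_left (by omega)
  by_contra! hne
  have hs : 2 ≤ s := by simp only [ne_eq, Prod.mk.injEq, true_and] at hne; omega
  have h₁ := hf.sub_of_fixed_level hend hinj hP h0 (by omega) hx hms hcs (s - 1)
  have h₀ := hf.sub_of_fixed_level hend hinj hP h0 (by omega) hx hms hcs s
  rw [Nat.sub_sub_self (by omega)] at h₁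
  rw [Nat.sub_self] at h₀
  have := Nat.mul_le_mul_left (s - 1) hk
  have := Nat.le_mul_of_pos_right s (by omega : 0 < k)
  have h1P : 1 ∈ P := by simpa [Nat.sub_sub_self (by omega : 1 ≤ s)] using hP.sub_mem h0 hx (s - 1)
  exact one_ne_zero (hf.level_injOn hinj h1P h0 (by omega) (by omega))

theorem offset_eq_zero_and_level_le (hf : HasLinearForm P ε m c 1) (hend : IsEndo P ε)
    (hinj : Set.InjOn ε (BF P)) (hP : OmegaClosed P) (h0 : 0 ∈ P) (hm0 : m 0 = 0) (hc0 : c 0 = 0)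
    {q : ℕ} (hq : q ∈ P) : m q = 0 ∧ c q ≤ q := by
  have hsub := hf.offset_level_sub hend hP h0 hq
  simp only [mul_one, hm0, hc0, zero_add, zero_tsub, zero_le, max_eq_left] at hsub
  have hm : m q = 0 := by
    obtain ⟨hmq, hcq⟩ := hsub (m q)
    have h := hinj (x₁ := (m q, m q, q - m q)) (x₂ := (0, 0, q)) (hP.sub_mem h0 hq _) hq
      (by rw [hf _ (hP.sub_mem h0 hq _), hf q hq, hcq]; simp only [Prod.mk.injEq]; omega)
    simp only [Prod.mk.injEq] at h
    exact h.1
  have := (hsub q).2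
  rw [Nat.sub_self, hc0, hm] at this
  omega

theorem eqOn_id_of_map_eq_self (hf : HasLinearForm P ε m c 1) (hend : IsEndo P ε)
    (hinj : Set.InjOn ε (BF P)) (hP : OmegaClosed P) (h0 : 0 ∈ P) {a b s : ℕ} (hs : s ∈ P)
    (hfix : ε (a, b, s) = (a, b, s)) : ∀ x ∈ BF P, ε x = x := by
  obtain ⟨hms, hcs, -⟩ := hf.of_map_eq_self le_rfl hs hfix
  have h₀ := hf.sub_of_fixed_level hend hinj hP h0 le_rfl hs hms hcs s
  simp only [Nat.sub_self, mul_one] at h₀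
  have hm : ∀ q ∈ P, m q = 0 ∧ c q ≤ q := fun q hq =>
    hf.offset_eq_zero_and_level_le hend hinj hP h0 h₀.1 h₀.2 hq
  have hc : ∀ q ∈ P, c q = q := by
    refine eqOn_self_of_injOn_of_le (fun q hq => ?_)
      (fun q hq q' hq' h => hf.level_injOn hinj hq hq' (by rw [(hm q hq).1, (hm q' hq').1]) h)
      (fun q hq => (hm q hq).2)
    simpa [BF, hf q hq] using hend.1 (0, 0, q) hq
  rintro ⟨a, b, q⟩ hq
  rw [hf q hq, (hm q hq).1, hc q hq]
  simp

end HasLinearForm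

theorem identity_iff_nonidempotent_fixed_iff_three_fixed_general (P : Set ℕ) (hP : OmegaClosed P)
    (h0 : 0 ∈ P) (ε : ℕ × ℕ × ℕ → ℕ × ℕ × ℕ)
    (hend : IsEndo P ε) (hinj : Set.InjOn ε (BF P)) :
    ((∀ x ∈ BF P, ε x = x) ↔
      ∃ i j p : ℕ, p ∈ P ∧ i ≠ j ∧ ε (i, j, p) = (i, j, p)) ∧
    ((∀ x ∈ BF P, ε x = x) ↔
      ∃ x ∈ BF P, ∃ y ∈ BF P, ∃ z ∈ BF P,
        x ≠ y ∧ x ≠ z ∧ y ≠ z ∧ ε x = x ∧ ε y = y ∧ ε z = z) := by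
  obtain ⟨m, c, k, hk, hf⟩ := hend.exists_hasLinearForm h0 hinj
  rcases hk.eq_or_lt with rfl | hk2
  · have hid : ∀ x ∈ BF P, ε x = x → ∀ y ∈ BF P, ε y = y := fun ⟨_, _, _⟩ hs hfix =>
      hf.eqOn_id_of_map_eq_self hend hinj hP h0 hs hfix
    exact ⟨⟨fun h => ⟨0, 1, 0, h0, zero_ne_one, h _ h0⟩,
        fun ⟨_, _, _, hp, _, hfix⟩ => hid _ hp hfix⟩,
      ⟨fun h => ⟨(0, 0, 0), h0, (0, 1, 0), h0, (1, 0, 0), h0, by decide, by decide, by decide,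
        h _ h0, h _ h0, h _ h0⟩, fun ⟨x, hx, _, _, _, _, _, _, _, hfx, _⟩ => hid x hx hfx⟩⟩
  · have hfixed : ∀ x ∈ BF P, ε x = x → x = (0, 0, 0) ∨ x = (0, 0, 1) := fun _ hx =>
      hf.eq_zero_or_eq_one_of_map_eq_self hend hinj hP h0 hk2 hx
    have hnot : ¬∀ x ∈ BF P, ε x = x := fun h => by
      rcases hfixed _ h0 (h (0, 1, 0) h0) with h | h <;> simp at h
    refine ⟨iff_of_false hnot ?_, iff_of_false hnot ?_⟩
    · rintro ⟨i, j, p, hp, hij, hfix⟩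
      rcases hfixed _ hp hfix with h | h <;> simp_all
    · rintro ⟨x, hx, y, hy, z, hz, hxy, hxz, hyz, hfx, hfy, hfz⟩
      rcases hfixed x hx hfx with rfl | rfl <;> rcases hfixed y hy hfy with rfl | rfl <;>
        rcases hfixed z hz hfz with rfl | rfl <;> simp_all

/-- **Theorem 2.5.** For an injective endomorphism `ε` of `B_ω^𝓕` (`P` ω-closed, `0 ∈ P`,
`P` with at least two elements) the following are equivalent:
(i) `ε` is the identity; (ii) `ε` fixes some non-idempotent element `(i,j,p)` (`i ≠ j`);
(iii) `ε` has at least three distinct fixed points. -/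
theorem identity_iff_nonidempotent_fixed_iff_three_fixed (P : Set ℕ) (hP : OmegaClosed P)
    (h0 : 0 ∈ P) (hP2 : P.Nontrivial) (ε : ℕ × ℕ × ℕ → ℕ × ℕ × ℕ)
    (hend : IsEndo P ε) (hinj : Set.InjOn ε (BF P)) :
    ((∀ x ∈ BF P, ε x = x) ↔
      ∃ i j p : ℕ, p ∈ P ∧ i ≠ j ∧ ε (i, j, p) = (i, j, p)) ∧
    ((∀ x ∈ BF P, ε x = x) ↔
      ∃ x ∈ BF P, ∃ y ∈ BF P, ∃ z ∈ BF P,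
        x ≠ y ∧ x ≠ z ∧ y ≠ z ∧ ε x = x ∧ ε y = y ∧ ε z = z) :=
  identity_iff_nonidempotent_fixed_iff_three_fixed_general P hP h0 ε hend hinj
end

section
/- For an injective endomorphism ε of the bicyclic semigroup B_ω the following conditions are equivalent: (i) ε is the identity map; (ii) there exists a non-idempotent element (i,j) ∈ B_ω (i.e. with i ≠ j) such that ε(i,j) = (i,j); (iii) ε has at least two distinct fixed points. (Remark 2.6) -/
/-- The multiplication of the bicyclic monoid `B_ω` on `ℕ × ℕ`:
`(i₁,j₁)·(i₂,j₂) = (i₁ + (i₂ ∸ j₁), j₂ + (j₁ ∸ i₂))`. -/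
def bimul (x y : ℕ × ℕ) : ℕ × ℕ :=
  (x.1 + (y.1 - x.2), y.2 + (x.2 - y.1))

/-- `ε` is an endomorphism of the bicyclic semigroup `B_ω`. -/
def IsBiEndo (ε : ℕ × ℕ → ℕ × ℕ) : Prop :=
  ∀ x y : ℕ × ℕ, ε (bimul x y) = bimul (ε x) (ε y)

/-!
Every endomorphism `ε` of `B_ω` is affine, `ε (i, j) = (c + k * i, c + k * j)`: the image
`(c, c)` of the identity is idempotent, the images of the generators `(0, 1)` and `(1, 0)`
multiply to it, which pins them down to `(c, c + k)` and `(c + k, c)`, and every `(i, j)` is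
the product `(1, 0)ⁱ (0, 1)ʲ`. A point is then fixed exactly when both coordinates are fixed
by `n ↦ c + k * n`, and an affine map of `ℕ` with two distinct fixed points is the identity.
-/

theorem bimul_self_eq_self_iff {x : ℕ × ℕ} : bimul x x = x ↔ x.1 = x.2 := by
  obtain ⟨a, b⟩ := x
  simp only [bimul, Prod.ext_iff]
  omega

theorem le_fst_of_bimul_eq {c u v : ℕ} (h : bimul (c, c) (u, v) = (u, v)) : c ≤ u := by
  simp only [bimul, Prod.ext_iff] at h
  omega

theorem le_snd_of_bimul_eq {c u v : ℕ} (h : bimul (u, v) (c, c) = (u, v)) : c ≤ v := by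
  simp only [bimul, Prod.ext_iff] at h
  omega

theorem eq_zero_and_eq_one_of_affine_fixed {c k a b : ℕ} (hab : a ≠ b)
    (ha : c + k * a = a) (hb : c + k * b = b) : c = 0 ∧ k = 1 := by
  rcases Nat.eq_zero_or_pos k with rfl | hk
  · omega
  have hc : c = 0 := by nlinarith
  subst hc
  rw [zero_add] at ha hb
  refine ⟨rfl, ?_⟩
  by_cases ha₀ : a = 0
  · exact (mul_eq_right₀ (by omega)).1 hb
  · exact (mul_eq_right₀ ha₀).1 ha

namespace IsBiEndo

variable {ε : ℕ × ℕ → ℕ × ℕ}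

theorem exists_map_zero_zero (hε : IsBiEndo ε) : ∃ c, ε (0, 0) = (c, c) := by
  have h := hε (0, 0) (0, 0)
  rw [show bimul (0, 0) (0, 0) = (0, 0) from rfl, eq_comm, bimul_self_eq_self_iff] at h
  exact ⟨(ε (0, 0)).1, Prod.ext rfl h.symm⟩

theorem le_map_fst_and_le_map_snd {c : ℕ} (hε : IsBiEndo ε) (h₀ : ε (0, 0) = (c, c))
    (x : ℕ × ℕ) :
    c ≤ (ε x).1 ∧ c ≤ (ε x).2 := by
  have hl := hε (0, 0) x
  have hr := hε x (0, 0)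
  rw [show bimul (0, 0) x = x by simp [bimul], h₀] at hl
  rw [show bimul x (0, 0) = x by simp [bimul], h₀] at hr
  exact ⟨le_fst_of_bimul_eq hl.symm, le_snd_of_bimul_eq hr.symm⟩

theorem exists_map_generators {c : ℕ} (hε : IsBiEndo ε) (h₀ : ε (0, 0) = (c, c)) :
    ∃ k, ε (0, 1) = (c, c + k) ∧ ε (1, 0) = (c + k, c) := by
  obtain ⟨hp₁, hp₂⟩ := hε.le_map_fst_and_le_map_snd h₀ (0, 1)
  obtain ⟨hq₁, hq₂⟩ := hε.le_map_fst_and_le_map_snd h₀ (1, 0)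
  have hpq := hε (0, 1) (1, 0)
  rw [show bimul (0, 1) (1, 0) = (0, 0) from rfl, h₀] at hpq
  generalize ε (0, 1) = p at hpq hp₁ hp₂ ⊢
  generalize ε (1, 0) = q at hpq hq₁ hq₂ ⊢
  obtain ⟨a₁, b₁⟩ := p
  obtain ⟨a₂, b₂⟩ := q
  simp only [bimul, Prod.ext_iff] at hpq hp₁ hp₂ hq₁ hq₂
  exact ⟨b₁ - c, Prod.ext (by omega) (by omega), Prod.ext (by omega) (by omega)⟩

theorem map_nat_zero {c k : ℕ} (hε : IsBiEndo ε) (h₀ : ε (0, 0) = (c, c))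
    (hq : ε (1, 0) = (c + k, c)) (i : ℕ) : ε (i, 0) = (c + k * i, c) := by
  induction i with
  | zero => simpa using h₀
  | succ n ih =>
    have h := hε (1, 0) (n, 0)
    rw [show bimul (1, 0) (n, 0) = (n + 1, 0) by simp [bimul, Nat.add_comm], hq, ih] at h
    rw [h]
    simp only [bimul, Prod.ext_iff]
    constructor <;> ring_nf <;> omega

theorem map_zero_nat {c k : ℕ} (hε : IsBiEndo ε) (h₀ : ε (0, 0) = (c, c))
    (hp : ε (0, 1) = (c, c + k)) (j : ℕ) : ε (0, j) = (c, c + k * j) := by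
  induction j with
  | zero => simpa using h₀
  | succ n ih =>
    have h := hε (0, n) (0, 1)
    rw [show bimul (0, n) (0, 1) = (0, n + 1) by simp [bimul, Nat.add_comm], hp, ih] at h
    rw [h]
    simp only [bimul, Prod.ext_iff]
    constructor <;> ring_nf <;> omega

theorem exists_affine (hε : IsBiEndo ε) :
    ∃ c k : ℕ, ∀ i j : ℕ, ε (i, j) = (c + k * i, c + k * j) := by
  obtain ⟨c, h₀⟩ := hε.exists_map_zero_zero
  obtain ⟨k, hp, hq⟩ := hε.exists_map_generators h₀
  refine ⟨c, k, fun i j => ?_⟩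
  have h := hε (i, 0) (0, j)
  rw [show bimul (i, 0) (0, j) = (i, j) by simp [bimul],
    hε.map_nat_zero h₀ hq, hε.map_zero_nat h₀ hp] at h
  rw [h]
  simp [bimul]

end IsBiEndo

theorem bicyclic_identity_iff_nonidempotent_fixed_iff_two_fixed_general (ε : ℕ × ℕ → ℕ × ℕ)
    (hend : IsBiEndo ε) :
    ((∀ x : ℕ × ℕ, ε x = x) ↔ ∃ i j : ℕ, i ≠ j ∧ ε (i, j) = (i, j)) ∧
    ((∀ x : ℕ × ℕ, ε x = x) ↔ ∃ x y : ℕ × ℕ, x ≠ y ∧ ε x = x ∧ ε y = y) := by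
  obtain ⟨c, k, hform⟩ := hend.exists_affine
  have fixed_iff (i j : ℕ) : ε (i, j) = (i, j) ↔ c + k * i = i ∧ c + k * j = j := by
    rw [hform, Prod.ext_iff]
  have eq_id {a b : ℕ} (hab : a ≠ b) (ha : c + k * a = a) (hb : c + k * b = b) (x : ℕ × ℕ) :
      ε x = x := by
    obtain ⟨rfl, rfl⟩ := eq_zero_and_eq_one_of_affine_fixed hab ha hb
    simp [hform]
  refine ⟨⟨fun h => ⟨0, 1, zero_ne_one, h _⟩, ?_⟩,
    ⟨fun h => ⟨(0, 0), (0, 1), by simp, h _, h _⟩, ?_⟩⟩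
  · rintro ⟨i, j, hij, hfix⟩
    exact eq_id hij ((fixed_iff i j).1 hfix).1 ((fixed_iff i j).1 hfix).2
  · rintro ⟨⟨a, b⟩, ⟨a', b'⟩, hne, hx, hy⟩
    rw [fixed_iff] at hx hy
    by_cases ha : a = a'
    · exact eq_id (fun hb => hne (by rw [ha, hb])) hx.2 hy.2
    · exact eq_id ha hx.1 hy.1

/-- **Remark 2.6.** For an injective endomorphism `ε` of the bicyclic semigroup `B_ω`
the following are equivalent: (i) `ε` is the identity; (ii) `ε` fixes some
non-idempotent element `(i,j)` (`i ≠ j`); (iii) `ε` has at least two distinct fixed points. -/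
theorem bicyclic_identity_iff_nonidempotent_fixed_iff_two_fixed (ε : ℕ × ℕ → ℕ × ℕ)
    (hend : IsBiEndo ε) (hinj : Function.Injective ε) :
    ((∀ x : ℕ × ℕ, ε x = x) ↔ ∃ i j : ℕ, i ≠ j ∧ ε (i, j) = (i, j)) ∧
    ((∀ x : ℕ × ℕ, ε x = x) ↔ ∃ x y : ℕ × ℕ, x ≠ y ∧ ε x = x ∧ ε y = y) :=
  bicyclic_identity_iff_nonidempotent_fixed_iff_two_fixed_general ε hend
end

section
/- Let P = {0,1} and let k ≥ 2 be a natural number. The map μ_k : B_ω^𝓕 → B_ω^𝓕 (𝓕 = {[0), [1)}) defined by μ_k(i,j,p) = (k·i, k·j, p) is an injective endomorphism of B_ω^𝓕 which is not the identity map and which has exactly two fixed points, namely the idempotents (0,0,0) and (0,0,1). (Hence the bound of three fixed points in condition (iii) of Theorem 2.5 cannot be lowered.) -/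
/- Multiplying the first two coordinates by `k` commutes with the truncated subtractions of
`bmul`, and since `p ≤ 1` the third coordinate only sees whether `i₂ ∸ j₁` (resp. `j₁ ∸ i₂`)
vanishes, which scaling by `k > 0` does not change. A fixed point must have `k·i = i` and
`k·j = j`, i.e. `i = j = 0`. -/

theorem Nat.sub_mul_eq_sub_of_le_one {p k : ℕ} (t : ℕ) (hp : p ≤ 1) (hk : 0 < k) :
    p - k * t = p - t := by
  rcases Nat.eq_zero_or_pos t with rfl | ht
  · simp
  · have : 1 ≤ k * t := Nat.one_le_iff_ne_zero.mpr (Nat.mul_ne_zero hk.ne' ht.ne')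
    omega

def scale (k : ℕ) (x : ℕ × ℕ × ℕ) : ℕ × ℕ × ℕ := (k * x.1, k * x.2.1, x.2.2)

theorem scale_bmul {k : ℕ} (hk : 0 < k) {x y : ℕ × ℕ × ℕ} (hx : x.2.2 ≤ 1) (hy : y.2.2 ≤ 1) :
    scale k (bmul x y) = bmul (scale k x) (scale k y) := by
  simp only [scale, bmul, ← Nat.mul_sub, ← Nat.mul_add, Nat.sub_mul_eq_sub_of_le_one _ hx hk,
    Nat.sub_mul_eq_sub_of_le_one _ hy hk]

theorem isEndo_scale {P : Set ℕ} (hP : ∀ p ∈ P, p ≤ 1) {k : ℕ} (hk : 0 < k) :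
    IsEndo P (scale k) :=
  ⟨fun _ hx => hx, fun _ hx _ hy => scale_bmul hk (hP _ hx) (hP _ hy)⟩

theorem scale_injective {k : ℕ} (hk : 0 < k) : Function.Injective (scale k) := by
  rintro ⟨i, j, p⟩ ⟨i', j', p'⟩ h
  simp only [scale, Prod.mk.injEq, Nat.mul_left_cancel_iff hk] at h
  simp only [h]

theorem scale_eq_self_iff {k : ℕ} (hk : 1 < k) {x : ℕ × ℕ × ℕ} :
    scale k x = x ↔ x.1 = 0 ∧ x.2.1 = 0 := by
  obtain ⟨i, j, p⟩ := x
  simp only [scale, Prod.mk.injEq, and_true]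
  constructor
  · rintro ⟨hi, hj⟩
    exact ⟨by nlinarith, by nlinarith⟩
  · rintro ⟨rfl, rfl⟩
    simp

theorem fixedPoints_scale {k : ℕ} (hk : 1 < k) (P : Set ℕ) :
    {x ∈ BF P | scale k x = x} = (fun p => ((0, 0, p) : ℕ × ℕ × ℕ)) '' P := by
  ext ⟨i, j, p⟩
  simp only [Set.mem_sep_iff, scale_eq_self_iff hk, Set.mem_image, Prod.mk.injEq, BF]
  constructor
  · rintro ⟨hp, rfl, rfl⟩
    exact ⟨p, hp, rfl, rfl, rfl⟩
  · rintro ⟨p, hp, rfl, rfl, rfl⟩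
    exact ⟨hp, rfl, rfl⟩

theorem bmul_diag_self_s8 (i p : ℕ) : bmul (i, i, p) (i, i, p) = (i, i, p) := by
  simp [bmul]

/-- **Example 2.9**, refined: for `P = {0,1}` and `k ≥ 2`, the map
`μ_k (i,j,p) = (k·i, k·j, p)` is an injective endomorphism of `B_ω^𝓕` which is not the
identity, and whose fixed points in `B_ω^𝓕` are exactly the two idempotents
`(0,0,0)` and `(0,0,1)`. -/
theorem mu_k_two_fixed_points (k : ℕ) (hk : 2 ≤ k) :
    IsEndo ({0, 1} : Set ℕ) (fun x : ℕ × ℕ × ℕ => (k * x.1, k * x.2.1, x.2.2)) ∧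
    Set.InjOn (fun x : ℕ × ℕ × ℕ => (k * x.1, k * x.2.1, x.2.2))
      (BF ({0, 1} : Set ℕ)) ∧
    ¬ (∀ x ∈ BF ({0, 1} : Set ℕ),
        (fun x : ℕ × ℕ × ℕ => (k * x.1, k * x.2.1, x.2.2)) x = x) ∧
    {x ∈ BF ({0, 1} : Set ℕ) | (k * x.1, k * x.2.1, x.2.2) = x} =
      {((0, 0, 0) : ℕ × ℕ × ℕ), ((0, 0, 1) : ℕ × ℕ × ℕ)} ∧
    bmul (0, 0, 0) (0, 0, 0) = ((0, 0, 0) : ℕ × ℕ × ℕ) ∧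
    bmul (0, 0, 1) (0, 0, 1) = ((0, 0, 1) : ℕ × ℕ × ℕ) := by
  have hP : ∀ p ∈ ({0, 1} : Set ℕ), p ≤ 1 := by
    rintro p (rfl | rfl) <;> simp
  refine ⟨isEndo_scale hP (by omega), (scale_injective (by omega)).injOn,
    fun h => by simpa using (scale_eq_self_iff hk).mp (h (1, 0, 0) (by simp [BF])),
    (fixedPoints_scale hk _).trans (Set.image_pair _ _ _), bmul_diag_self_s8 0 0, bmul_diag_self_s8 0 1⟩
end

section
/- Let P ⊆ ℕ be ω-closed with 0 ∈ P and k ∈ P for some k ≥ 2, and consider the natural partial order on the idempotents of B_ω^𝓕 (𝓕 = {[p) : p ∈ P}): e ≼ f iff e·f = f·e = e. Then for j ∈ ℕ the set of idempotents f of B_ω^𝓕 with (j,j,k) ≼ f is a chain (i.e. any two of its elements are comparable under ≼) if and only if j = 0; moreover, for j = 0 this set equals {(0,0,q) : q ∈ P, q ≤ k}, which has exactly k+1 elements, with greatest element (0,0,0) and least element (0,0,k). (Claims in the proof of Lemma 2.2.) -/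
/-- The set `↑_≼ (j,j,k)` of idempotents `f` of `B_ω^𝓕` lying above the idempotent
`(j,j,k)` in the natural partial order `e ≼ f ↔ e·f = f·e = e`. -/
def upIdem (P : Set ℕ) (j k : ℕ) : Set (ℕ × ℕ × ℕ) :=
  {f | f ∈ BF P ∧ bmul f f = f ∧
    bmul (j, j, k) f = (j, j, k) ∧ bmul f (j, j, k) = (j, j, k)}

/-!
Idempotents are the triples `(a, a, p)`, and `(a, a, p) ≼ (c, c, q)` holds iff `c ≤ a` and
`q ≤ p + (a - c)`. So the idempotents above `(j, j, k)` are the `(a, a, p)` with `p ∈ P`, `a ≤ j`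
and `p ≤ k + (j - a)`. For `j = 0` these are the `(0, 0, p)` with `p ≤ k` (all of which lie in `P`
by ω-closedness), ordered by the reverse of `≤` on `p`. For `j ≥ 1` the idempotents `(j, j, 0)`
and `(j - 1, j - 1, k)` lie above `(j, j, k)` and are incomparable as soon as `k ≥ 2`.
-/

/-- The natural partial order `e ≼ f` on idempotents of `B_ω^𝓕`. -/
def IdemLE (e f : ℕ × ℕ × ℕ) : Prop :=
  bmul e f = e ∧ bmul f e = e

lemma OmegaClosed.mem_of_le {P : Set ℕ} (hP : OmegaClosed P) (h0 : 0 ∈ P) {k q : ℕ}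
    (hkP : k ∈ P) (hq : q ≤ k) : q ∈ P := by
  simpa [Nat.sub_sub_self hq] using hP 0 h0 k hkP (k - q)

lemma bmul_self_eq_self_iff {i j p : ℕ} : bmul (i, j, p) (i, j, p) = (i, j, p) ↔ i = j := by
  simp only [bmul, Prod.mk.injEq]
  omega

lemma idemLE_iff {a c p q : ℕ} : IdemLE (a, a, p) (c, c, q) ↔ c ≤ a ∧ q ≤ p + (a - c) := by
  simp only [IdemLE, bmul, Prod.mk.injEq]
  omega

lemma mem_upIdem_iff {P : Set ℕ} {j k a b p : ℕ} :
    (a, b, p) ∈ upIdem P j k ↔ p ∈ P ∧ a = b ∧ a ≤ j ∧ p ≤ k + (j - a) := by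
  change p ∈ P ∧ bmul (a, b, p) (a, b, p) = (a, b, p) ∧ IdemLE (j, j, k) (a, b, p) ↔ _
  rw [bmul_self_eq_self_iff]
  constructor
  · rintro ⟨hp, rfl, hle⟩
    exact ⟨hp, rfl, idemLE_iff.1 hle⟩
  · rintro ⟨hp, rfl, hle⟩
    exact ⟨hp, rfl, idemLE_iff.2 hle⟩

lemma upIdem_zero_eq {P : Set ℕ} {k : ℕ} :
    upIdem P 0 k = {x : ℕ × ℕ × ℕ | ∃ q ∈ P, q ≤ k ∧ x = (0, 0, q)} := by
  ext ⟨a, b, p⟩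
  simp only [mem_upIdem_iff, Set.mem_ofPred_eq, Prod.mk.injEq]
  constructor
  · rintro ⟨hp, rfl, ha, hpk⟩
    exact ⟨p, hp, by omega, by omega, by omega, rfl⟩
  · rintro ⟨q, hq, hqk, rfl, rfl, rfl⟩
    exact ⟨hq, rfl, le_rfl, by omega⟩

lemma upIdem_zero_eq_image_Iic {P : Set ℕ} (hP : OmegaClosed P) (h0 : 0 ∈ P) {k : ℕ}
    (hkP : k ∈ P) : upIdem P 0 k = (fun q ↦ ((0, 0, q) : ℕ × ℕ × ℕ)) '' Set.Iic k := by
  rw [upIdem_zero_eq]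
  ext x
  constructor
  · rintro ⟨q, -, hqk, rfl⟩
    exact ⟨q, hqk, rfl⟩
  · rintro ⟨q, hqk, rfl⟩
    exact ⟨q, hP.mem_of_le h0 hkP hqk, hqk, rfl⟩

lemma ncard_upIdem_zero {P : Set ℕ} (hP : OmegaClosed P) (h0 : 0 ∈ P) {k : ℕ}
    (hkP : k ∈ P) : (upIdem P 0 k).ncard = k + 1 := by
  rw [upIdem_zero_eq_image_Iic hP h0 hkP,
    Set.ncard_image_of_injective _ fun p q h ↦ (Prod.ext_iff.1 (Prod.ext_iff.1 h).2).2,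
    Set.ncard_Iic_nat]

lemma idemLE_of_mem_upIdem_zero {P : Set ℕ} {k : ℕ} {e f : ℕ × ℕ × ℕ}
    (he : e ∈ upIdem P 0 k) (hf : f ∈ upIdem P 0 k) (hef : f.2.2 ≤ e.2.2) : IdemLE e f := by
  rw [upIdem_zero_eq] at he hf
  obtain ⟨p, -, -, rfl⟩ := he
  obtain ⟨q, -, -, rfl⟩ := hf
  exact idemLE_iff.2 ⟨le_rfl, by simpa using hef⟩

lemma isChain_upIdem_zero {P : Set ℕ} {k : ℕ} : IsChain IdemLE (upIdem P 0 k) :=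
  fun e he f hf _ ↦ (le_total f.2.2 e.2.2).imp
    (idemLE_of_mem_upIdem_zero he hf) (idemLE_of_mem_upIdem_zero hf he)

lemma not_isChain_upIdem {P : Set ℕ} (h0 : 0 ∈ P) {k : ℕ} (hk : 2 ≤ k) (hkP : k ∈ P)
    {j : ℕ} (hj : j ≠ 0) : ¬ IsChain IdemLE (upIdem P j k) := by
  intro hchain
  have hmem₁ : ((j, j, 0) : ℕ × ℕ × ℕ) ∈ upIdem P j k :=
    mem_upIdem_iff.2 ⟨h0, rfl, le_rfl, by omega⟩
  have hmem₂ : ((j - 1, j - 1, k) : ℕ × ℕ × ℕ) ∈ upIdem P j k :=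
    mem_upIdem_iff.2 ⟨hkP, rfl, by omega, by omega⟩
  have hne : ((j, j, 0) : ℕ × ℕ × ℕ) ≠ (j - 1, j - 1, k) := by
    simp only [ne_eq, Prod.mk.injEq]
    omega
  rcases hchain hmem₁ hmem₂ hne with h | h <;> rw [idemLE_iff] at h <;> omega

/-- Claims in the proof of **Lemma 2.2**: for `P` ω-closed with `0 ∈ P` and `k ∈ P`,
`k ≥ 2`, the set of idempotents above `(j,j,k)` in the natural partial order is a chain
iff `j = 0`; moreover for `j = 0` this set equals `{(0,0,q) : q ∈ P, q ≤ k}`, has exactly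
`k+1` elements, and has greatest element `(0,0,0)` and least element `(0,0,k)`. -/
theorem upIdem_chain_iff_and_description (P : Set ℕ) (hP : OmegaClosed P) (h0 : 0 ∈ P)
    (k : ℕ) (hk : 2 ≤ k) (hkP : k ∈ P) (j : ℕ) :
    (IsChain (fun a b : ℕ × ℕ × ℕ => bmul a b = a ∧ bmul b a = a) (upIdem P j k) ↔
      j = 0) ∧
    upIdem P 0 k = {x : ℕ × ℕ × ℕ | ∃ q ∈ P, q ≤ k ∧ x = (0, 0, q)} ∧
    (upIdem P 0 k).ncard = k + 1 ∧
    ((0, 0, 0) : ℕ × ℕ × ℕ) ∈ upIdem P 0 k ∧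
    ((0, 0, k) : ℕ × ℕ × ℕ) ∈ upIdem P 0 k ∧
    (∀ f ∈ upIdem P 0 k, bmul f (0, 0, 0) = f ∧ bmul (0, 0, 0) f = f) ∧
    (∀ f ∈ upIdem P 0 k,
      bmul (0, 0, k) f = ((0, 0, k) : ℕ × ℕ × ℕ) ∧
      bmul f (0, 0, k) = ((0, 0, k) : ℕ × ℕ × ℕ)) := by
  have hmem : ∀ {q}, q ∈ P → q ≤ k → ((0, 0, q) : ℕ × ℕ × ℕ) ∈ upIdem P 0 k := fun hq hqk ↦
    upIdem_zero_eq ▸ ⟨_, hq, hqk, rfl⟩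
  have hle_k : ∀ f ∈ upIdem P 0 k, f.2.2 ≤ k := fun f hf ↦ by
    obtain ⟨q, -, hqk, rfl⟩ := upIdem_zero_eq ▸ hf
    exact hqk
  refine ⟨⟨fun hchain ↦ by_contra fun hj ↦ not_isChain_upIdem h0 hk hkP hj hchain,
      fun hj ↦ hj ▸ isChain_upIdem_zero⟩,
    upIdem_zero_eq, ncard_upIdem_zero hP h0 hkP, hmem h0 k.zero_le, hmem hkP le_rfl,
    fun f hf ↦ idemLE_of_mem_upIdem_zero hf (hmem h0 k.zero_le) f.2.2.zero_le,
    fun f hf ↦ idemLE_of_mem_upIdem_zero (hmem hkP le_rfl) hf (hle_k f hf)⟩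
end
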